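/- Let R be a commutative local ring in which 2 = 0, and let q(x,y,z) = c_xx·x² + c_yy·y² + c_zz·z² + c_xy·xy + c_xz·xz + c_yz·yz be a ternary quadratic form with coefficients in R such that at least one of c_xy, c_xz, c_yz is a unit of R. Then there exist a unit λ ∈ R, an invertible matrix M ∈ GL₃(R), and elements a, b ∈ R such that λ·q(M·(x,y,z)) = a·x² + b·y² + x·z + z². (Local normal form of a conic bundle in characteristic 2 near a point whose fibre is a smooth conic or a cross of lines.) -/

import Mathlib

/-- The ternary quadratic form with coefficients `cxx, …, cyz` over a commutative ring. -/
def ternaryQF {R : Type*} [CommRing R] (cxx cyy czz cxy cxz cyz : R)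
    (v : Fin 3 → R) : R :=
  cxx * v 0 ^ 2 + cyy * v 1 ^ 2 + czz * v 2 ^ 2
    + cxy * (v 0 * v 1) + cxz * (v 0 * v 2) + cyz * (v 1 * v 2)

/-!
In characteristic 2 the shears `x ↦ x + r y`, `z ↦ z + p y` remove the `xy` and `yz` terms of
a form whose `xz` coefficient is `1`, leaving `A x² + B y² + C z² + xz`. The binary part
`A x² + xz + C z²` takes a unit value at one of `(0,1)`, `(1,0)`, `(1,1)`, since in a local
ring `C`, `A` and `A + C + 1` cannot all be nonunits; moving that vector to the `z`-axis and
rescaling gives the normal form.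
-/

open Matrix

def ProjEquiv {ι R : Type*} [Fintype ι] [DecidableEq ι] [CommRing R]
    (q q' : (ι → R) → R) : Prop :=
  ∃ (l : R) (M : Matrix ι ι R), IsUnit l ∧ IsUnit M.det ∧ ∀ v, l * q (M *ᵥ v) = q' v

namespace ProjEquiv

variable {ι R : Type*} [Fintype ι] [DecidableEq ι] [CommRing R] {q q' q'' : (ι → R) → R}

theorem trans (h : ProjEquiv q q') (h' : ProjEquiv q' q'') : ProjEquiv q q'' := by
  obtain ⟨l, M, hl, hM, hq⟩ := h
  obtain ⟨l', M', hl', hM', hq'⟩ := h'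
  refine ⟨l' * l, M * M', hl'.mul hl, by simpa [det_mul] using hM.mul hM', fun v => ?_⟩
  rw [← hq', ← hq, ← mulVec_mulVec, mul_assoc]

theorem of_mulVec (M : Matrix ι ι R) (hM : IsUnit M.det) (h : ∀ v, q (M *ᵥ v) = q' v) :
    ProjEquiv q q' :=
  ⟨1, M, isUnit_one, hM, by simpa using h⟩

theorem of_smul (u : Rˣ) (h : ∀ v, u * q v = q' v) : ProjEquiv q q' :=
  ⟨u, 1, u.isUnit, by simp, by simpa using h⟩

end ProjEquiv

theorem Matrix.mulVec_fin_three {α : Type*} [NonUnitalNonAssocSemiring α]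
    (a b c d e f g h i : α) (v : Fin 3 → α) :
    !![a, b, c; d, e, f; g, h, i] *ᵥ v
      = ![a * v 0 + b * v 1 + c * v 2, d * v 0 + e * v 1 + f * v 2, g * v 0 + h * v 1 + i * v 2] := by
  ext j
  fin_cases j <;> simp [mulVec, dotProduct, Fin.sum_univ_three]

section TernaryQF

variable {R : Type*} [CommRing R]

theorem ternaryQF_vec3 (cxx cyy czz cxy cxz cyz x y z : R) :
    ternaryQF cxx cyy czz cxy cxz cyz ![x, y, z]
      = cxx * x ^ 2 + cyy * y ^ 2 + czz * z ^ 2 + cxy * (x * y) + cxz * (x * z) + cyz * (y * z) :=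
  rfl

theorem projEquiv_ternaryQF_swap_xy (cxx cyy czz cxy cxz cyz : R) :
    ProjEquiv (ternaryQF cxx cyy czz cxy cxz cyz) (ternaryQF cyy cxx czz cxy cyz cxz) :=
  .of_mulVec !![0, 1, 0; 1, 0, 0; 0, 0, 1] (by simp [det_fin_three]) fun v => by
    rw [mulVec_fin_three, ternaryQF_vec3, ternaryQF]; ring

theorem projEquiv_ternaryQF_swap_yz (cxx cyy czz cxy cxz cyz : R) :
    ProjEquiv (ternaryQF cxx cyy czz cxy cxz cyz) (ternaryQF cxx czz cyy cxz cxy cyz) :=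
  .of_mulVec !![1, 0, 0; 0, 0, 1; 0, 1, 0] (by simp [det_fin_three]) fun v => by
    rw [mulVec_fin_three, ternaryQF_vec3, ternaryQF]; ring

theorem projEquiv_ternaryQF_swap_xz (cxx cyy czz cxy cxz cyz : R) :
    ProjEquiv (ternaryQF cxx cyy czz cxy cxz cyz) (ternaryQF czz cyy cxx cyz cxz cxy) :=
  .of_mulVec !![0, 0, 1; 0, 1, 0; 1, 0, 0] (by simp [det_fin_three]) fun v => by
    rw [mulVec_fin_three, ternaryQF_vec3, ternaryQF]; ring

theorem projEquiv_ternaryQF_smul (u : Rˣ) (cxx cyy czz cxy cxz cyz : R) :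
    ProjEquiv (ternaryQF cxx cyy czz cxy cxz cyz)
      (ternaryQF (u * cxx) (u * cyy) (u * czz) (u * cxy) (u * cxz) (u * cyz)) :=
  .of_smul u fun v => by simp only [ternaryQF]; ring

theorem projEquiv_ternaryQF_elim_xy_yz (h2 : (2 : R) = 0) (A B C p r : R) :
    ProjEquiv (ternaryQF A B C p 1 r) (ternaryQF A (B + A * r ^ 2 + C * p ^ 2 + p * r) C 0 1 0) :=
  .of_mulVec !![1, r, 0; 0, 1, 0; 0, p, 1] (by simp [det_fin_three]) fun v => by
    rw [mulVec_fin_three, ternaryQF_vec3, ternaryQF]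
    linear_combination
      (A * r * v 0 * v 1 + C * p * v 1 * v 2 + p * r * v 1 ^ 2 + p * v 0 * v 1 + r * v 1 * v 2) * h2

theorem projEquiv_ternaryQF_shear_xz (h2 : (2 : R) = 0) (A B C : R) :
    ProjEquiv (ternaryQF A B C 0 1 0) (ternaryQF A B (A + C + 1) 0 1 0) :=
  .of_mulVec !![1, 0, 1; 0, 1, 0; 0, 0, 1] (by simp [det_fin_three]) fun v => by
    rw [mulVec_fin_three, ternaryQF_vec3, ternaryQF]
    linear_combination A * v 0 * v 2 * h2

theorem projEquiv_ternaryQF_diagonal_normalForm (A B : R) (u : Rˣ) :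
    ProjEquiv (ternaryQF A B u 0 1 0) (ternaryQF (A * u) (u⁻¹ * B) 1 0 1 0) :=
  ⟨↑u⁻¹, !![(u : R), 0, 0; 0, 1, 0; 0, 0, 1], Units.isUnit _, by simp [det_fin_three],
    fun v => by
      rw [mulVec_fin_three, ternaryQF_vec3, ternaryQF]
      linear_combination (A * u * v 0 ^ 2 + v 2 ^ 2 + v 0 * v 2) * u.inv_mul⟩

end TernaryQF

theorem IsLocalRing.isUnit_add_add_one {R : Type*} [CommRing R] [IsLocalRing R] {a b : R}
    (ha : ¬IsUnit a) (hb : ¬IsUnit b) : IsUnit (a + b + 1) := by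
  have h : IsUnit (a + b + 1 + -(a + b)) := by convert isUnit_one; ring
  refine (isUnit_or_isUnit_of_isUnit_add h).resolve_right ?_
  rw [IsUnit.neg_iff]
  exact nonunits_add ha hb

section LocalCharTwo

variable {R : Type*} [CommRing R] [IsLocalRing R] (h2 : (2 : R) = 0)
include h2

theorem exists_projEquiv_normalForm_of_diagonal (A B C : R) :
    ∃ a b : R, ProjEquiv (ternaryQF A B C 0 1 0) (ternaryQF a b 1 0 1 0) := by
  by_cases hC : IsUnit C
  · obtain ⟨u, rfl⟩ := hC
    exact ⟨_, _, projEquiv_ternaryQF_diagonal_normalForm A B u⟩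
  by_cases hA : IsUnit A
  · obtain ⟨u, rfl⟩ := hA
    exact ⟨_, _, (projEquiv_ternaryQF_swap_xz _ _ _ _ _ _).trans
      (projEquiv_ternaryQF_diagonal_normalForm C B u)⟩
  · obtain ⟨u, hu⟩ := IsLocalRing.isUnit_add_add_one hA hC
    refine ⟨A * u, u⁻¹ * B, (projEquiv_ternaryQF_shear_xz h2 A B C).trans ?_⟩
    rw [← hu]
    exact projEquiv_ternaryQF_diagonal_normalForm A B u

theorem exists_projEquiv_normalForm_of_xz_eq_one (A B C p r : R) :
    ∃ a b : R, ProjEquiv (ternaryQF A B C p 1 r) (ternaryQF a b 1 0 1 0) := by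
  obtain ⟨a, b, hdiag⟩ := exists_projEquiv_normalForm_of_diagonal h2 A _ C
  exact ⟨a, b, (projEquiv_ternaryQF_elim_xy_yz h2 A B C p r).trans hdiag⟩

theorem exists_projEquiv_normalForm_of_isUnit_xz (cxx cyy czz cxy cxz cyz : R)
    (hxz : IsUnit cxz) :
    ∃ a b : R, ProjEquiv (ternaryQF cxx cyy czz cxy cxz cyz) (ternaryQF a b 1 0 1 0) := by
  obtain ⟨u, rfl⟩ := hxz
  have hscale := projEquiv_ternaryQF_smul u⁻¹ cxx cyy czz cxy u cyz
  rw [Units.inv_mul] at hscale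
  obtain ⟨a, b, h⟩ := exists_projEquiv_normalForm_of_xz_eq_one h2 _ _ _ _ _
  exact ⟨a, b, hscale.trans h⟩

theorem exists_projEquiv_normalForm (cxx cyy czz cxy cxz cyz : R)
    (hu : IsUnit cxy ∨ IsUnit cxz ∨ IsUnit cyz) :
    ∃ a b : R, ProjEquiv (ternaryQF cxx cyy czz cxy cxz cyz) (ternaryQF a b 1 0 1 0) := by
  rcases hu with hxy | hxz | hyz
  · obtain ⟨a, b, h⟩ := exists_projEquiv_normalForm_of_isUnit_xz h2 _ _ _ _ _ _ hxy
    exact ⟨a, b, (projEquiv_ternaryQF_swap_yz _ _ _ _ _ _).trans h⟩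
  · exact exists_projEquiv_normalForm_of_isUnit_xz h2 _ _ _ _ _ _ hxz
  · obtain ⟨a, b, h⟩ := exists_projEquiv_normalForm_of_isUnit_xz h2 _ _ _ _ _ _ hyz
    exact ⟨a, b, (projEquiv_ternaryQF_swap_xy _ _ _ _ _ _).trans h⟩

end LocalCharTwo

/-- over a commutative local ring `R` with `2 = 0`, a ternary quadratic form
one of whose mixed coefficients is a unit can be brought, by a unit scalar `λ` and an
invertible linear change of coordinates `M`, into the normal form
`a·x² + b·y² + x·z + z²`. -/
theorem local_normal_form_char_two
    (R : Type*) [CommRing R] [IsLocalRing R] (h2 : (2 : R) = 0)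
    (cxx cyy czz cxy cxz cyz : R)
    (hu : IsUnit cxy ∨ IsUnit cxz ∨ IsUnit cyz) :
    ∃ (l : R) (M : Matrix (Fin 3) (Fin 3) R) (a b : R),
      IsUnit l ∧ IsUnit M.det ∧
      ∀ v : Fin 3 → R,
        l * ternaryQF cxx cyy czz cxy cxz cyz (M.mulVec v)
          = a * v 0 ^ 2 + b * v 1 ^ 2 + v 0 * v 2 + v 2 ^ 2 := by
  obtain ⟨a, b, l, M, hl, hM, hq⟩ := exists_projEquiv_normalForm h2 _ _ _ _ _ _ hu
  refine ⟨l, M, a, b, hl, hM, fun v => ?_⟩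
  rw [hq]
  simp only [ternaryQF]
  ring
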